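/- arXiv:1812.10737 — 2 statements merged into one kernel-verified Lean document; each statement's English description precedes it below -/
import Mathlib

section
/- If G is a simple graph on n vertices that does not contain a path of length k (k edges), then the number of edges of G is at most (k-1)n/2. -/
/-!
Induction on the number of vertices. A vertex of degree at most `(k - 1) / 2` can be deleted, and a
disconnected graph splits into two smaller ones; if `n ≤ k` the trivial bound `2e ≤ n (n - 1)`
suffices. What remains is a connected graph with `n > k` and minimum degree at least `k / 2`, and
such a graph contains a path of length `k`: a path `P` from `a` to `b` with
`length P < deg a + deg b` either extends at an end, or, by pigeonhole, has consecutive vertices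
`u, w` with `a ~ w` and `b ~ u`, so that its vertices span a cycle, and an outside neighbour of
this cycle (which exists by connectivity) yields a longer path (Pósa rotation).
-/

open Finset

namespace SimpleGraph

variable {V : Type*} {G : SimpleGraph V}

def HasPathOfLength (G : SimpleGraph V) (k : ℕ) : Prop :=
  ∃ (u v : V) (p : G.Walk u v), p.IsPath ∧ p.length = k

namespace Walk

lemma exists_eq_append_cons_of_mem_darts {u v : V} {p : G.Walk u v} {d : G.Dart}
    (hd : d ∈ p.darts) :
    ∃ (q : G.Walk u d.fst) (r : G.Walk d.snd v), p = q.append (cons d.adj r) := by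
  induction p with
  | nil => simp at hd
  | cons h p ih =>
    rcases List.mem_cons.mp hd with rfl | hd
    · exact ⟨nil, p, rfl⟩
    · obtain ⟨q, r, rfl⟩ := ih hd
      exact ⟨cons h q, r, rfl⟩

/-- With the edges `a w` and `b u`, the vertices of `P = p₁ ++ p₂ ++ (u w) ++ q` lie on the
cycle `p₁, p₂, (u b), q.reverse, (w a)`; cutting it open next to `y` and prepending `x` gives
the longer path. -/
lemma hasPathOfLength_succ_of_rotation_left {a y u w b x : V}
    (p₁ : G.Walk a y) (p₂ : G.Walk y u) (huw : G.Adj u w) (q : G.Walk w b)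
    (haw : G.Adj a w) (hbu : G.Adj b u)
    (hP : ((p₁.append p₂).append (cons huw q)).IsPath)
    (hx : x ∉ ((p₁.append p₂).append (cons huw q)).support) (hxy : G.Adj x y) :
    G.HasPathOfLength (((p₁.append p₂).append (cons huw q)).length + 1) := by
  cases p₂ with
  | nil =>
    have hperm : (p₁.reverse.append (cons haw q)).support.Perm
        ((p₁.append nil).append (cons huw q)).support := by
      simp only [support_append, support_reverse, support_cons, List.tail_cons, append_nil]
      exact (List.reverse_perm _).append_right _
    refine ⟨x, b, cons hxy (p₁.reverse.append (cons haw q)), ?_, ?_⟩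
    · exact (IsPath.mk' (hperm.nodup_iff.mpr hP.support_nodup)).cons (hperm.mem_iff.not.mpr hx)
    · simp
  | cons hyz p₂ =>
    have hperm : (p₁.reverse.append (cons haw (q.append (cons hbu p₂.reverse)))).support.Perm
        ((p₁.append (cons hyz p₂)).append (cons huw q)).support := by
      simp only [support_append, support_reverse, support_cons, List.tail_cons, List.append_assoc]
      exact (List.reverse_perm _).append
        (List.perm_append_comm.trans ((List.reverse_perm _).append_right _))
    refine ⟨x, _, cons hxy (p₁.reverse.append (cons haw (q.append (cons hbu p₂.reverse)))),
      ?_, ?_⟩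
    · exact (IsPath.mk' (hperm.nodup_iff.mpr hP.support_nodup)).cons (hperm.mem_iff.not.mpr hx)
    · simp only [length_cons, length_append, length_reverse]
      omega

lemma hasPathOfLength_succ_of_rotation {a u w b x y : V}
    (p : G.Walk a u) (huw : G.Adj u w) (q : G.Walk w b) (haw : G.Adj a w) (hbu : G.Adj b u)
    (hP : (p.append (cons huw q)).IsPath) (hx : x ∉ (p.append (cons huw q)).support)
    (hy : y ∈ (p.append (cons huw q)).support) (hxy : G.Adj x y) :
    G.HasPathOfLength ((p.append (cons huw q)).length + 1) := by
  rw [support_append, support_cons, List.tail_cons, List.mem_append] at hy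
  rcases hy with hy | hy
  · obtain ⟨p₁, p₂, rfl⟩ := mem_support_iff_exists_append.mp hy
    exact hasPathOfLength_succ_of_rotation_left p₁ p₂ huw q haw hbu hP hx hxy
  · have hrev : (p.append (cons huw q)).reverse = q.reverse.append (cons huw.symm p.reverse) := by
      simp only [reverse_append, reverse_cons, ← append_assoc, cons_append, nil_append]
    rw [← length_reverse, hrev]
    rw [← isPath_reverse_iff, hrev] at hP
    rw [← List.mem_reverse, ← support_reverse, hrev] at hx
    rw [← List.mem_reverse, ← support_reverse] at hy
    obtain ⟨q₁, q₂, hq⟩ := mem_support_iff_exists_append.mp hy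
    rw [hq] at hP hx ⊢
    exact hasPathOfLength_succ_of_rotation_left q₁ q₂ huw.symm p.reverse hbu haw hP hx hxy

lemma exists_eq_append_cons_of_length_lt_degree_add_degree [Fintype V] [DecidableRel G.Adj]
    {a b : V} {P : G.Walk a b} (ha : ∀ v, G.Adj a v → v ∈ P.support)
    (hb : ∀ v, G.Adj b v → v ∈ P.support) (hdeg : P.length < G.degree a + G.degree b) :
    ∃ (u w : V) (p : G.Walk a u) (huw : G.Adj u w) (q : G.Walk w b),
      P = p.append (cons huw q) ∧ G.Adj a w ∧ G.Adj b u := by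
  classical
  set A := P.darts.toFinset.filter (fun d => G.Adj a d.snd)
  set B := P.darts.toFinset.filter (fun d => G.Adj b d.fst)
  have hA : G.degree a ≤ #A := by
    rw [← card_neighborFinset_eq_degree]
    refine card_le_card_of_surjOn (·.snd) fun v hv => ?_
    rw [mem_coe, mem_neighborFinset] at hv
    have : v ∈ P.darts.map (·.snd) := by
      have := ha v hv
      rw [← P.cons_map_snd_darts] at this
      exact (List.mem_cons.mp this).resolve_left (G.ne_of_adj hv).symm
    obtain ⟨d, hd, rfl⟩ := List.mem_map.mp this
    exact ⟨d, by simp [A, hd, hv], rfl⟩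
  have hB : G.degree b ≤ #B := by
    rw [← card_neighborFinset_eq_degree]
    refine card_le_card_of_surjOn (·.fst) fun v hv => ?_
    rw [mem_coe, mem_neighborFinset] at hv
    have : v ∈ P.darts.map (·.fst) := by
      have := hb v hv
      rw [← P.map_fst_darts_append, List.mem_append, List.mem_singleton] at this
      exact this.resolve_right (G.ne_of_adj hv).symm
    obtain ⟨d, hd, rfl⟩ := List.mem_map.mp this
    exact ⟨d, by simp [B, hd, hv], rfl⟩
  have hAB : #(A ∪ B) ≤ P.length :=
    (card_le_card (union_subset (filter_subset _ _) (filter_subset _ _))).trans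
      ((List.toFinset_card_le _).trans P.length_darts.le)
  obtain ⟨d, hd⟩ : (A ∩ B).Nonempty := by
    rw [← card_pos]
    have := card_union_add_card_inter A B
    omega
  simp only [A, B, mem_inter, mem_filter, List.mem_toFinset] at hd
  obtain ⟨p, q, rfl⟩ := exists_eq_append_cons_of_mem_darts hd.1.1
  exact ⟨_, _, p, d.adj, q, rfl, hd.1.2, hd.2.2⟩

lemma IsPath.hasPathOfLength_succ [Fintype V] [DecidableRel G.Adj] (hG : G.Preconnected)
    {a b : V} {P : G.Walk a b} (hP : P.IsPath) (hcard : P.length + 1 < Fintype.card V)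
    (hdeg : P.length < G.degree a + G.degree b) : G.HasPathOfLength (P.length + 1) := by
  classical
  by_cases ha : ∃ v, G.Adj a v ∧ v ∉ P.support
  · obtain ⟨v, hav, hv⟩ := ha
    exact ⟨v, b, cons hav.symm P, hP.cons hv, rfl⟩
  by_cases hb : ∃ v, G.Adj b v ∧ v ∉ P.support
  · obtain ⟨v, hbv, hv⟩ := hb
    exact ⟨v, a, cons hbv.symm P.reverse, hP.reverse.cons (by simpa using hv), by simp⟩
  push Not at ha hb
  obtain ⟨x, -, hx⟩ : ∃ x ∈ (univ : Finset V), x ∉ P.support.toFinset :=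
    exists_mem_notMem_of_card_lt_card <| by
      rw [card_univ]
      exact (List.toFinset_card_le _).trans_lt (by simpa using hcard)
  rw [List.mem_toFinset] at hx
  obtain ⟨d, -, hy, hx⟩ :=
    (hG a x).some.exists_boundary_dart {v | v ∈ P.support} P.start_mem_support hx
  obtain ⟨u, w, p, huw, q, rfl, haw, hbu⟩ :=
    exists_eq_append_cons_of_length_lt_degree_add_degree ha hb hdeg
  exact hasPathOfLength_succ_of_rotation p huw q haw hbu hP hx hy d.adj.symm

end Walk

lemma hasPathOfLength_of_le_two_mul_degree [Fintype V] [DecidableRel G.Adj]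
    (hG : G.Preconnected) {k : ℕ} (hk : k < Fintype.card V) (hdeg : ∀ v, k ≤ 2 * G.degree v) :
    G.HasPathOfLength k := by
  suffices ∀ m ≤ k, G.HasPathOfLength m from this k le_rfl
  intro m
  induction m with
  | zero =>
    intro
    have : Nonempty V := Fintype.card_pos_iff.mp (by omega)
    exact ⟨Classical.arbitrary V, _, .nil, .nil, rfl⟩
  | succ m ih =>
    intro hm
    obtain ⟨a, b, P, hP, rfl⟩ := ih (by omega)
    exact hP.hasPathOfLength_succ hG (by omega) (by have := hdeg a; have := hdeg b; omega)

lemma HasPathOfLength.map {W : Type*} {G' : SimpleGraph W} (f : G ↪g G') {k : ℕ}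
    (h : G.HasPathOfLength k) : G'.HasPathOfLength k :=
  let ⟨u, v, p, hp, hk⟩ := h
  ⟨f u, f v, p.map f.toHom, hp.map f.injective, by rw [Walk.length_map, hk]⟩

section Counting

variable [Fintype V] [DecidableRel G.Adj]

lemma two_mul_card_edgeFinset_le_card_mul_card_sub_one :
    2 * #G.edgeFinset ≤ Fintype.card V * (Fintype.card V - 1) :=
  (Nat.mul_le_mul_left 2 card_edgeFinset_le_card_choose_two).trans <| by
    rw [Nat.choose_two_right]
    exact Nat.mul_div_le _ _

lemma card_edgeFinset_induce_compl_singleton_add_degree [DecidableEq V] (v : V) :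
    #(G.induce {v}ᶜ).edgeFinset + G.degree v = #G.edgeFinset := by
  rw [card_edgeFinset_induce_compl_singleton, card_edgeFinset_deleteIncidenceSet,
    Nat.sub_add_cancel]
  rw [← card_incidenceFinset_eq_degree]
  exact card_le_card (G.incidenceFinset_subset v)

lemma two_mul_card_edgeFinset_induce_of_neighborSet_subset {s : Set V}
    [DecidablePred (· ∈ s)] (hs : ∀ v ∈ s, G.neighborSet v ⊆ s) :
    2 * #(G.induce s).edgeFinset = ∑ v : s, G.degree v := by
  rw [← sum_degrees_eq_twice_card_edges]
  exact sum_congr rfl fun v _ => degree_induce_of_neighborSet_subset (hs v v.2)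

lemma card_edgeFinset_eq_add_of_neighborSet_subset {s : Set V} [DecidablePred (· ∈ s)]
    (hs : ∀ v ∈ s, G.neighborSet v ⊆ s) :
    #G.edgeFinset = #(G.induce s).edgeFinset + #(G.induce sᶜ).edgeFinset := by
  have hsc : ∀ v ∈ sᶜ, G.neighborSet v ⊆ sᶜ := fun v hv w hw hws =>
    hv (hs w hws (G.adj_symm hw))
  suffices 2 * #G.edgeFinset =
      2 * #(G.induce s).edgeFinset + 2 * #(G.induce sᶜ).edgeFinset by omega
  rw [two_mul_card_edgeFinset_induce_of_neighborSet_subset hs,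
    two_mul_card_edgeFinset_induce_of_neighborSet_subset hsc, ← sum_degrees_eq_twice_card_edges]
  exact (Fintype.sum_subtype_add_sum_subtype (· ∈ s) (G.degree ·)).symm

theorem two_mul_card_edgeFinset_le_of_not_hasPathOfLength {k : ℕ}
    (h : ¬ G.HasPathOfLength k) : 2 * #G.edgeFinset ≤ (k - 1) * Fintype.card V := by
  classical
  induction hn : Fintype.card V using Nat.strong_induction_on generalizing V with
  | _ n ih =>
  have hind (s : Set V) [DecidablePred (· ∈ s)] (hs : Fintype.card s < n) :
      2 * #(G.induce s).edgeFinset ≤ (k - 1) * Fintype.card s :=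
    ih _ hs (fun hp => h (hp.map (Embedding.induce s))) rfl
  by_cases hsmall : n ≤ k
  · have := G.two_mul_card_edgeFinset_le_card_mul_card_sub_one
    rw [hn] at this
    exact this.trans (by rw [mul_comm]; gcongr)
  by_cases hlow : ∃ v, 2 * G.degree v < k
  · obtain ⟨v, hv⟩ := hlow
    have hcard : Fintype.card ({v}ᶜ : Set V) = n - 1 := by
      rw [Fintype.card_compl_set, Set.card_singleton, hn]
    have hrest := hind {v}ᶜ (by omega)
    rw [hcard, Nat.mul_sub_one] at hrest
    rw [← G.card_edgeFinset_induce_compl_singleton_add_degree v]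
    have := Nat.le_mul_of_pos_right (k - 1) (show 0 < n by omega)
    omega
  push Not at hsmall hlow
  by_cases hG : G.Preconnected
  · exact absurd (hasPathOfLength_of_le_two_mul_degree hG (hn ▸ hsmall) hlow) h
  obtain ⟨u, w, huw⟩ : ∃ u w, ¬ G.Reachable u w := by simpa [Preconnected] using hG
  set s : Set V := {v | G.Reachable u v}
  have hs : ∀ v ∈ s, G.neighborSet v ⊆ s := fun v hv x hx => hv.trans hx.reachable
  have hu : 0 < Fintype.card s := Fintype.card_pos_iff.mpr ⟨⟨u, Reachable.refl u⟩⟩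
  have hw : 0 < Fintype.card ↑sᶜ := Fintype.card_pos_iff.mpr ⟨⟨w, huw⟩⟩
  have hcard : Fintype.card s + Fintype.card ↑sᶜ = n := by
    rw [Fintype.card_compl_set, ← hn]
    exact Nat.add_sub_of_le (set_fintype_card_le_univ s)
  have hs' := hind s (by omega)
  have hsc := hind sᶜ (by omega)
  rw [card_edgeFinset_eq_add_of_neighborSet_subset hs, ← hcard, mul_add (k - 1)]
  omega

end Counting

end SimpleGraph

theorem erdos_gallai_path_general (n k : ℕ)
    (G : SimpleGraph (Fin n)) [DecidableRel G.Adj]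
    (hpath : ∀ (u v : Fin n) (p : G.Walk u v), p.IsPath → p.length ≠ k) :
    2 * G.edgeFinset.card ≤ (k - 1) * n := by
  simpa using SimpleGraph.two_mul_card_edgeFinset_le_of_not_hasPathOfLength (G := G)
    fun ⟨u, v, p, hp, hk⟩ => hpath u v p hp hk

theorem erdos_gallai_path (n k : ℕ) (hk : 1 ≤ k) (hkn : k ≤ n)
    (G : SimpleGraph (Fin n)) [DecidableRel G.Adj]
    (hpath : ∀ (u v : Fin n) (p : G.Walk u v), p.IsPath → p.length ≠ k) :
    2 * G.edgeFinset.card ≤ (k - 1) * n :=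
  erdos_gallai_path_general n k G hpath
end

section
/- An (s, k-1)-block tree contains no Berge cycle of length at least k. -/
/-- A Berge cycle of length `t` in a (simple) hypergraph with edge set `E`. -/
def BergeCycle {V : Type*} (E : Finset (Finset V)) (t : ℕ) : Prop :=
  ∃ (v : Fin t → V) (e : Fin t → Finset V),
    Function.Injective v ∧ Function.Injective e ∧
    ∀ i : Fin t, e i ∈ E ∧ v i ∈ e i ∧ v ⟨(i.val + 1) % t, Nat.mod_lt _ i.pos⟩ ∈ e i

/-- The 2-shadow of a hypergraph: two vertices are adjacent iff they are
distinct and lie in a common hyperedge. -/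
def shadowGraph {V : Type*} (E : Finset (Finset V)) : SimpleGraph V :=
  SimpleGraph.fromRel (fun u v => ∃ s ∈ E, u ∈ s ∧ v ∈ s)

/-- A vertex set `B` induces a 2-connected subgraph of `G`. -/
def TwoConnectedOn {V : Type*} (G : SimpleGraph V) (B : Finset V) : Prop :=
  3 ≤ B.card ∧ (G.induce (B : Set V)).Connected ∧
    ∀ x ∈ B, (G.induce ((B : Set V) \ {x})).Connected

/-- A block of `G`: a maximal vertex set inducing a 2-connected subgraph. -/
def IsBlockOf {V : Type*} (G : SimpleGraph V) (B : Finset V) : Prop :=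
  TwoConnectedOn G B ∧ ∀ B' : Finset V, TwoConnectedOn G B' → B ⊆ B' → B' = B

/-- An `(s, k-1)`-block tree: the 2-shadow is connected, every edge of the
2-shadow lies in some block, and every block has `s` vertices which induce
exactly `k - 1` hyperedges. -/
def IsBlockTree {V : Type*} [DecidableEq V] (E : Finset (Finset V)) (s k : ℕ) : Prop :=
  (shadowGraph E).Connected ∧
  (∀ u v : V, (shadowGraph E).Adj u v →
    ∃ B : Finset V, IsBlockOf (shadowGraph E) B ∧ u ∈ B ∧ v ∈ B) ∧
  (∀ B : Finset V, IsBlockOf (shadowGraph E) B →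
    B.card = s ∧ (E.filter (fun h => h ⊆ B)).card = k - 1)


/-!
A Berge cycle `v₀ e₁ v₁ … e_t` with `t ≥ 3` traces a cycle `v₀ v₁ … v_{t-1}` in the 2-shadow, whose
vertex set is 2-connected; since it contains the shadow edge `v₀v₁`, it lies in the block `B`
through that edge. Each `eᵢ` is a clique of the shadow sharing the two vertices `vᵢ₋₁, vᵢ` with
`B`, so it lies in `B` as well. Thus `B` contains the `t ≥ k` distinct hyperedges of the cycle,
whereas it induces only `k - 1`.
-/

namespace SimpleGraph

variable {V : Type*} {G : SimpleGraph V}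

lemma IsClique.induce_connected {S : Set V} (hS : G.IsClique S) (hne : S.Nonempty) :
    (G.induce S).Connected := by
  have := hne.to_subtype
  rw [induce_eq_top.mpr hS]
  exact connected_top

lemma induce_image_Iic_connected_of_adj {w : ℕ → V} {m : ℕ}
    (hadj : ∀ i < m, G.Adj (w i) (w (i + 1))) : (G.induce (w '' Set.Iic m)).Connected := by
  have hmem : ∀ i ≤ m, w i ∈ w '' Set.Iic m := fun i hi => ⟨i, hi, rfl⟩
  have hreach : ∀ i (hi : i ≤ m),
      (G.induce (w '' Set.Iic m)).Reachable ⟨w 0, hmem 0 m.zero_le⟩ ⟨w i, hmem i hi⟩ := by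
    intro i
    induction i with
    | zero => exact fun _ => .rfl
    | succ j ih => exact fun hj => (ih (by omega)).trans (Adj.reachable (hadj j (by omega)))
  refine (connected_iff _).mpr ⟨?_, ⟨⟨w 0, hmem 0 m.zero_le⟩⟩⟩
  rintro ⟨_, i, hi, rfl⟩ ⟨_, j, hj, rfl⟩
  exact (hreach i hi).symm.trans (hreach j hj)

end SimpleGraph

open SimpleGraph

section Blocks

variable {V : Type*} {G : SimpleGraph V}

lemma TwoConnectedOn.of_isClique {S : Finset V} (hS : G.IsClique (S : Set V)) (h3 : 3 ≤ S.card) :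
    TwoConnectedOn G S := by
  refine ⟨h3, hS.induce_connected (Finset.card_pos.mp (by omega)), fun z _ => ?_⟩
  obtain ⟨a, ha, haz⟩ := Finset.exists_mem_ne (s := S) (by omega) z
  exact (hS.subset Set.sdiff_subset).induce_connected ⟨a, ha, haz⟩

variable [DecidableEq V]

lemma TwoConnectedOn.union {B D : Finset V} (hB : TwoConnectedOn G B) (hD : TwoConnectedOn G D)
    {x y : V} (hxB : x ∈ B) (hxD : x ∈ D) (hyB : y ∈ B) (hyD : y ∈ D) (hxy : x ≠ y) :
    TwoConnectedOn G (B ∪ D) := by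
  have hdelete : ∀ {S : Finset V}, TwoConnectedOn G S → ∀ z,
      (G.induce ((S : Set V) \ {z})).Connected := by
    intro S hS z
    by_cases hz : z ∈ S
    · exact hS.2.2 z hz
    · rw [Set.sdiff_singleton_eq_self (by exact_mod_cast hz)]
      exact hS.2.1
  refine ⟨hB.1.trans (Finset.card_le_card Finset.subset_union_left), ?_, fun z _ => ?_⟩
  · rw [Finset.coe_union]
    exact induce_union_connected hB.2.1.preconnected hD.2.1.preconnected ⟨x, hxB, hxD⟩
  · rw [Finset.coe_union, Set.union_sdiff_distrib]
    refine induce_union_connected (hdelete hB z).preconnected (hdelete hD z).preconnected ?_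
    rcases eq_or_ne x z with rfl | hxz
    · exact ⟨y, ⟨hyB, hxy.symm⟩, ⟨hyD, hxy.symm⟩⟩
    · exact ⟨x, ⟨hxB, hxz⟩, ⟨hxD, hxz⟩⟩

lemma IsBlockOf.subset_of_twoConnectedOn {B D : Finset V} (hB : IsBlockOf G B)
    (hD : TwoConnectedOn G D) {x y : V} (hxB : x ∈ B) (hxD : x ∈ D) (hyB : y ∈ B) (hyD : y ∈ D)
    (hxy : x ≠ y) : D ⊆ B := by
  rw [← hB.2 _ (TwoConnectedOn.union hB.1 hD hxB hxD hyB hyD hxy) Finset.subset_union_left]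
  exact Finset.subset_union_right

lemma IsBlockOf.subset_of_isClique {B S : Finset V} (hB : IsBlockOf G B)
    (hS : G.IsClique (S : Set V)) {x y : V} (hxB : x ∈ B) (hxS : x ∈ S) (hyB : y ∈ B)
    (hyS : y ∈ S) (hxy : x ≠ y) : S ⊆ B := by
  by_cases h3 : 3 ≤ S.card
  · exact hB.subset_of_twoConnectedOn (.of_isClique hS h3) hxB hxS hyB hyS hxy
  · have hpair : S = {x, y} :=
      (Finset.eq_of_subset_of_card_le (Finset.insert_subset hxS (by simpa using hyS))
        (by rw [Finset.card_pair hxy]; omega)).symm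
    rw [hpair, Finset.insert_subset_iff, Finset.singleton_subset_iff]
    exact ⟨hxB, hyB⟩

end Blocks

/-- `w` runs around a cycle of exactly `t` distinct values: it is `t`-periodic and injective on
each period. -/
def IsCyclicSeq {α : Type*} (t : ℕ) (w : ℕ → α) : Prop :=
  ∀ a b, w a = w b ↔ a ≡ b [MOD t]

namespace IsCyclicSeq

variable {α : Type*} {t : ℕ} {w : ℕ → α}

lemma injOn (h : IsCyclicSeq t w) : Set.InjOn w (Set.Iio t) :=
  fun a ha b hb hab => ((h a b).1 hab).eq_of_lt_of_lt ha hb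

lemma range_eq_image_Iio (h : IsCyclicSeq t w) (ht : 0 < t) : Set.range w = w '' Set.Iio t := by
  refine subset_antisymm ?_ (Set.image_subset_range _ _)
  rintro _ ⟨a, rfl⟩
  exact ⟨a % t, Nat.mod_lt a ht, (h _ _).2 (Nat.mod_modEq a t)⟩

lemma comp_add (h : IsCyclicSeq t w) (c : ℕ) : IsCyclicSeq t (fun a => w (c + a)) :=
  fun _ _ => (h _ _).trans ⟨Nat.ModEq.add_left_cancel' c, Nat.ModEq.add_left c⟩

lemma range_comp_add (h : IsCyclicSeq t w) (ht : 0 < t) (c : ℕ) :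
    Set.range (fun a => w (c + a)) = Set.range w := by
  refine subset_antisymm (Set.range_comp_subset_range _ w) ?_
  rintro _ ⟨a, rfl⟩
  have hc : c ≤ c * t := Nat.le_mul_of_pos_right c ht
  refine ⟨a + c * t - c, (h _ _).2 ?_⟩
  rw [show c + (a + c * t - c) = a + c * t by omega]
  exact Nat.add_mul_mod_self_right a c t

lemma range_sdiff_last (h : IsCyclicSeq t w) (ht : 2 ≤ t) :
    Set.range w \ {w (t - 1)} = w '' Set.Iic (t - 2) := by
  rw [h.range_eq_image_Iio (by omega), ← Set.image_singleton,
    ← h.injOn.image_sdiff_subset (by simp only [Set.singleton_subset_iff, Set.mem_Iio]; omega)]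
  congr 1
  ext i
  simp only [Set.mem_sdiff, Set.mem_Iio, Set.mem_singleton_iff, Set.mem_Iic]
  omega

lemma ne_succ (h : IsCyclicSeq t w) (ht : 2 ≤ t) (a : ℕ) : w a ≠ w (a + 1) := fun hw =>
  absurd (Nat.le_of_dvd one_pos (Nat.add_modEq_left_iff.1 ((h _ _).1 hw).symm)) (by omega)

variable [DecidableEq α]

lemma mem_image_range (h : IsCyclicSeq t w) (ht : 0 < t) (a : ℕ) :
    w a ∈ (Finset.range t).image w := by
  rw [← Finset.mem_coe, Finset.coe_image, Finset.coe_range, ← h.range_eq_image_Iio ht]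
  exact Set.mem_range_self a

lemma card_image_range (h : IsCyclicSeq t w) : ((Finset.range t).image w).card = t := by
  rw [Finset.card_image_of_injOn (by simpa only [Finset.coe_range] using h.injOn),
    Finset.card_range]

end IsCyclicSeq

lemma IsCyclicSeq.twoConnectedOn {V : Type*} [DecidableEq V] {G : SimpleGraph V} {t : ℕ}
    {w : ℕ → V} (hw : IsCyclicSeq t w) (ht : 3 ≤ t) (hadj : ∀ a, G.Adj (w a) (w (a + 1))) :
    TwoConnectedOn G ((Finset.range t).image w) := by
  have hcoe : ((Finset.range t).image w : Set V) = Set.range w := by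
    rw [Finset.coe_image, Finset.coe_range, hw.range_eq_image_Iio (by omega)]
  refine ⟨hw.card_image_range.symm ▸ ht, ?_, fun x hx => ?_⟩
  · have hIio : Set.Iio t = Set.Iic (t - 1) := by ext; simp only [Set.mem_Iio, Set.mem_Iic]; omega
    rw [hcoe, hw.range_eq_image_Iio (by omega), hIio]
    exact SimpleGraph.induce_image_Iic_connected_of_adj fun i _ => hadj i
  · obtain ⟨j, -, rfl⟩ := Finset.mem_image.1 hx
    have hlast : w (j + 1 + (t - 1)) = w j :=
      (hw _ _).2 (by rw [show j + 1 + (t - 1) = j + t by omega]; exact Nat.add_mod_right j t)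
    rw [hcoe, ← hw.range_comp_add (by omega) (j + 1), ← hlast,
      (hw.comp_add (j + 1)).range_sdiff_last (by omega)]
    exact SimpleGraph.induce_image_Iic_connected_of_adj fun i _ => hadj (j + 1 + i)

lemma isClique_shadowGraph {V : Type*} {E : Finset (Finset V)} {f : Finset V} (hf : f ∈ E) :
    (shadowGraph E).IsClique (f : Set V) := fun u hu v hv huv => by
  rw [shadowGraph, SimpleGraph.fromRel_adj]
  exact ⟨huv, Or.inl ⟨f, hf, hu, hv⟩⟩

lemma BergeCycle.exists_isCyclicSeq {V : Type*} {E : Finset (Finset V)} {t : ℕ}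
    (h : BergeCycle E t) (ht : 0 < t) :
    ∃ (w : ℕ → V) (f : ℕ → Finset V), IsCyclicSeq t w ∧ IsCyclicSeq t f ∧
      ∀ a, f a ∈ E ∧ w a ∈ f a ∧ w (a + 1) ∈ f a := by
  obtain ⟨v, e, hv, he, hc⟩ := h
  let idx : ℕ → Fin t := fun a => ⟨a % t, Nat.mod_lt a ht⟩
  have hidx : ∀ a b, idx a = idx b ↔ a ≡ b [MOD t] := fun _ _ => Fin.ext_iff
  refine ⟨v ∘ idx, e ∘ idx, fun a b => hv.eq_iff.trans (hidx a b),
    fun a b => he.eq_iff.trans (hidx a b), fun a => ?_⟩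
  have hsucc : idx (a + 1) = ⟨((idx a).val + 1) % t, Nat.mod_lt _ ht⟩ :=
    Fin.ext (Nat.mod_add_mod a t 1).symm
  simpa only [Function.comp_apply, hsucc] using hc (idx a)

theorem block_tree_no_long_berge_cycle_general (n k s : ℕ) (hk : 3 ≤ k)
    (E : Finset (Finset (Fin n)))
    (htree : IsBlockTree E s k) :
    ∀ t, k ≤ t → ¬ BergeCycle E t := by
  intro t ht hcyc
  obtain ⟨w, f, hw, hf, hwf⟩ := hcyc.exists_isCyclicSeq (by omega)
  have hadj : ∀ a, (shadowGraph E).Adj (w a) (w (a + 1)) := fun a =>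
    isClique_shadowGraph (hwf a).1 (hwf a).2.1 (hwf a).2.2 (hw.ne_succ (by omega) a)
  obtain ⟨B, hB, h0B, h1B⟩ := htree.2.1 _ _ (hadj 0)
  have hwB : ∀ a, w a ∈ B := fun a =>
    hB.subset_of_twoConnectedOn (hw.twoConnectedOn (by omega) hadj) h0B
      (hw.mem_image_range (by omega) 0) h1B (hw.mem_image_range (by omega) 1)
      (hw.ne_succ (by omega) 0) (hw.mem_image_range (by omega) a)
  have hfB : ∀ a, f a ⊆ B := fun a =>
    hB.subset_of_isClique (isClique_shadowGraph (hwf a).1) (hwB a) (hwf a).2.1 (hwB (a + 1))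
      (hwf a).2.2 (hw.ne_succ (by omega) a)
  have hcount : t ≤ (E.filter (fun h => h ⊆ B)).card := by
    rw [← hf.card_image_range]
    refine Finset.card_le_card fun x hx => ?_
    obtain ⟨a, -, rfl⟩ := Finset.mem_image.1 hx
    exact Finset.mem_filter.2 ⟨(hwf a).1, hfB a⟩
  have := (htree.2.2 B hB).2
  omega

theorem block_tree_no_long_berge_cycle (n r k s : ℕ) (hk : 3 ≤ k) (hkr : k ≤ r)
    (hs : s = r ∨ s = r + 1)
    (E : Finset (Finset (Fin n))) (hunif : ∀ e ∈ E, e.card = r)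
    (htree : IsBlockTree E s k) :
    ∀ t, k ≤ t → ¬ BergeCycle E t :=
  block_tree_no_long_berge_cycle_general n k s hk E htree
end
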